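/- Let M be an R-optimal (perfect and R-feasible) matching and M_opt an optimal perfect matching in a bipartite graph where: there are at most k₂·n/√r boundary vertices, each of at most l pieces R_j has at most k₁·√r boundary vertices, and δ(u,v) = max{1, i(u,v)·m_j·n/(m√r), 2·i(u,v)·√r} where i(u,v) = 1 iff (u,v) is a boundary edge of piece R_j with m_j edges (∑_j m_j = m). Then c(M) ≤ c(M_opt) + (2k₁ + 4k₂ + 2)·n. -/

import Mathlib

/-- Slack of an edge with respect to matching `M`, costs `c`, errors `δ`, duals `y`. -/
def slack {V : Type*} [DecidableEq V] (M : Finset (V × V)) (c δ : V × V → ℝ)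
    (y : V → ℝ) (e : V × V) : ℝ :=
  if e ∈ M then y e.1 + y e.2 - c e + δ e else c e + δ e - y e.1 - y e.2

/-- A perfect matching of the bipartite graph with parts `A`, `B` and edge set `E`. -/
def IsPerfectMatching {V : Type*} (A B : Finset V) (E M : Finset (V × V)) : Prop :=
  M ⊆ E ∧ (∀ a ∈ A, ∃! e, e ∈ M ∧ e.1 = a) ∧ (∀ b ∈ B, ∃! e, e ∈ M ∧ e.2 = b)

/-!
Both matchings are perfect, so the dual values cancel and `R`-feasibility bounds
`c(M) - c(Mopt)` by the sum of `δ` over `M ∆ Mopt`. Every vertex meets at most two edges of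
`M ∪ Mopt`, so `M ∆ Mopt` has at most `2n` edges, at most `2 k₂ n / √r` boundary edges, and at
most `2 k₁ √r` boundary edges in each piece `R_j`. As `∑ⱼ mⱼ = m`, the three parts of `δ`
contribute at most `2n`, `4 k₂ n` and `2 k₁ n`.
-/

open Finset

theorem Finset.sum_comp_of_existsUnique {α β γ : Type*} [AddCommMonoid γ] {s : Finset α}
    {t : Finset β} {p : α → β} (hp : ∀ x ∈ s, p x ∈ t) (h : ∀ b ∈ t, ∃! x, x ∈ s ∧ p x = b)
    (f : β → γ) : ∑ x ∈ s, f (p x) = ∑ b ∈ t, f b := by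
  refine sum_bij (fun x _ => p x) hp (fun x hx x' hx' hxx' => ?_) (fun b hb => ?_) fun _ _ => rfl
  · exact (h (p x) (hp x hx)).unique ⟨hx, rfl⟩ ⟨hx', hxx'.symm⟩
  · obtain ⟨x, ⟨hx, rfl⟩, -⟩ := h b hb
    exact ⟨x, hx, rfl⟩

theorem Finset.sum_card_fiber_le_mul_card {α ι : Type*} [DecidableEq ι] {T E : Finset α}
    (hTE : T ⊆ E) (f : α → ι) {K : ℝ} (hK : 0 ≤ K) (hT : ∀ j, (#{e ∈ T | f e = j} : ℝ) ≤ K) :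
    ∑ e ∈ T, (#{x ∈ E | f x = f e} : ℝ) ≤ K * #E := by
  have hfibers : ∑ j ∈ T.image f, (#{x ∈ E | f x = j} : ℝ) ≤ #E := by
    rw [card_eq_sum_card_image f E]
    push_cast
    exact sum_le_sum_of_subset_of_nonneg (image_subset_image hTE) fun _ _ _ => by positivity
  rw [sum_comp (fun j => (#{x ∈ E | f x = j} : ℝ)) f]
  calc ∑ j ∈ T.image f, #{e ∈ T | f e = j} • (#{x ∈ E | f x = j} : ℝ)
      ≤ ∑ j ∈ T.image f, K * #{x ∈ E | f x = j} := sum_le_sum fun j _ => by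
        rw [nsmul_eq_mul]; exact mul_le_mul_of_nonneg_right (hT j) (by positivity)
    _ ≤ K * #E := by rw [← mul_sum]; exact mul_le_mul_of_nonneg_left hfibers hK

theorem Finset.sum_card_fiber_mul_div_le {α ι : Type*} [DecidableEq ι] {T E : Finset α}
    (hTE : T ⊆ E) (f : α → ι) (n : ℕ) {k s : ℝ} (hk : 0 ≤ k) (hs : 0 < s)
    (hT : ∀ j, (#{e ∈ T | f e = j} : ℝ) ≤ k * s) :
    ∑ e ∈ T, (#{x ∈ E | f x = f e} : ℝ) * n / (#E * s) ≤ k * n := by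
  have hfiber := sum_card_fiber_le_mul_card hTE f (by positivity) hT
  rw [← sum_div, ← sum_mul, mul_div_mul_comm]
  calc (∑ e ∈ T, (#{x ∈ E | f x = f e} : ℝ)) / #E * (n / s) ≤ k * s * (n / s) :=
        mul_le_mul_of_nonneg_right (div_le_of_le_mul₀ (by positivity) (by positivity) hfiber)
          (by positivity)
    _ = k * n := by field_simp

theorem max_one_max_le_one_add {x y : ℝ} (hx : 0 ≤ x) (hy : 0 ≤ y) :
    max 1 (max x y) ≤ 1 + (x + y) :=
  max_le (by linarith) (max_le (by linarith) (by linarith))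

theorem Finset.sum_le_card_add_sum_filter {α : Type*} {D : Finset α} (p : α → Prop)
    [DecidablePred p] {f g : α → ℝ} (h : ∀ e ∈ D, f e ≤ 1 + if p e then g e else 0) :
    ∑ e ∈ D, f e ≤ #D + ∑ e ∈ D with p e, g e := by
  calc ∑ e ∈ D, f e ≤ ∑ e ∈ D, (1 + if p e then g e else 0) := sum_le_sum h
    _ = #D + ∑ e ∈ D with p e, g e := by simp only [sum_add_distrib, sum_filter, sum_const,
      nsmul_eq_mul, mul_one]

namespace IsPerfectMatching

variable {V : Type*} {A B : Finset V} {E M M' : Finset (V × V)}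

theorem sum_fst {α : Type*} [AddCommMonoid α] (hE : ∀ e ∈ E, e.1 ∈ A ∧ e.2 ∈ B)
    (hM : IsPerfectMatching A B E M) (f : V → α) : ∑ e ∈ M, f e.1 = ∑ a ∈ A, f a :=
  sum_comp_of_existsUnique (fun e he => (hE e (hM.1 he)).1) hM.2.1 f

theorem sum_snd {α : Type*} [AddCommMonoid α] (hE : ∀ e ∈ E, e.1 ∈ A ∧ e.2 ∈ B)
    (hM : IsPerfectMatching A B E M) (f : V → α) : ∑ e ∈ M, f e.2 = ∑ b ∈ B, f b :=
  sum_comp_of_existsUnique (fun e he => (hE e (hM.1 he)).2) hM.2.2 f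

theorem card_eq (hE : ∀ e ∈ E, e.1 ∈ A ∧ e.2 ∈ B) (hM : IsPerfectMatching A B E M) :
    #M = #A := by
  simpa using hM.sum_fst hE fun _ => (1 : ℕ)

theorem card_filter_incident_le_one [DecidableEq V] (hAB : Disjoint A B)
    (hE : ∀ e ∈ E, e.1 ∈ A ∧ e.2 ∈ B) (hM : IsPerfectMatching A B E M) (v : V) :
    #{e ∈ M | e.1 = v ∨ e.2 = v} ≤ 1 := by
  refine card_le_one.mpr fun e he e' he' => ?_
  rw [mem_filter] at he he'
  have hends : ∀ x ∈ M, x.1 ∈ A ∧ x.2 ∈ B := fun x hx => hE x (hM.1 hx)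
  by_cases hv : v ∈ A
  · have hfst : ∀ x ∈ M, (x.1 = v ∨ x.2 = v) → x.1 = v := fun x hx hxv =>
      hxv.resolve_right fun h => disjoint_left.mp hAB hv (h ▸ (hends x hx).2)
    exact (hM.2.1 v hv).unique ⟨he.1, hfst e he.1 he.2⟩ ⟨he'.1, hfst e' he'.1 he'.2⟩
  · have hsnd : ∀ x ∈ M, (x.1 = v ∨ x.2 = v) → x.2 = v := fun x hx hxv =>
      hxv.resolve_left fun h => hv (h ▸ (hends x hx).1)
    have hvB : v ∈ B := hsnd e he.1 he.2 ▸ (hends e he.1).2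
    exact (hM.2.2 v hvB).unique ⟨he.1, hsnd e he.1 he.2⟩ ⟨he'.1, hsnd e' he'.1 he'.2⟩

/-- Each vertex meets at most two edges of `M ∪ M'`. -/
theorem card_le_two_mul_card_of_covered [DecidableEq V] (hAB : Disjoint A B)
    (hE : ∀ e ∈ E, e.1 ∈ A ∧ e.2 ∈ B) (hM : IsPerfectMatching A B E M)
    (hM' : IsPerfectMatching A B E M') {D : Finset (V × V)} (hD : D ⊆ M ∪ M') {S : Finset V}
    (hS : ∀ e ∈ D, e.1 ∈ S ∨ e.2 ∈ S) : #D ≤ 2 * #S := by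
  refine card_le_mul_card_image_of_maps_to (f := fun e => if e.1 ∈ S then e.1 else e.2)
    (fun e he => ?_) 2 fun v _ => ?_
  · split_ifs with h
    exacts [h, (hS e he).resolve_left h]
  calc #{e ∈ D | (if e.1 ∈ S then e.1 else e.2) = v}
      ≤ #{e ∈ M ∪ M' | e.1 = v ∨ e.2 = v} := card_le_card fun e he => by
        rw [mem_filter] at he ⊢
        refine ⟨hD he.1, ?_⟩
        split_ifs at he <;> tauto
    _ ≤ #{e ∈ M | e.1 = v ∨ e.2 = v} + #{e ∈ M' | e.1 = v ∨ e.2 = v} := by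
        rw [filter_union]; exact card_union_le _ _
    _ ≤ 1 + 1 := add_le_add (hM.card_filter_incident_le_one hAB hE v)
        (hM'.card_filter_incident_le_one hAB hE v)

theorem card_symmDiff_le [DecidableEq V] (hE : ∀ e ∈ E, e.1 ∈ A ∧ e.2 ∈ B)
    (hM : IsPerfectMatching A B E M) (hM' : IsPerfectMatching A B E M') :
    #(symmDiff M M') ≤ 2 * #A :=
  calc #(symmDiff M M') ≤ #M + #M' := (card_le_card symmDiff_le_sup).trans (card_union_le M M')
    _ = 2 * #A := by rw [hM.card_eq hE, hM'.card_eq hE, two_mul]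

theorem card_filter_piece_le [DecidableEq V] {ι : Type*} [DecidableEq ι] (hAB : Disjoint A B)
    (hE : ∀ e ∈ E, e.1 ∈ A ∧ e.2 ∈ B) (hM : IsPerfectMatching A B E M)
    (hM' : IsPerfectMatching A B E M') {D : Finset (V × V)} (hD : D ⊆ M ∪ M') {S : Finset V}
    (hS : ∀ e ∈ D, e.1 ∈ S ∨ e.2 ∈ S) (piece : V × V → ι) (j : ι) :
    #{e ∈ D | piece e = j} ≤
      2 * #{v ∈ S | {f ∈ E | piece f = j ∧ (f.1 = v ∨ f.2 = v)}.Nonempty} := by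
  refine hM.card_le_two_mul_card_of_covered hAB hE hM' ((filter_subset _ _).trans hD)
    fun e he => ?_
  obtain ⟨heD, rfl⟩ := mem_filter.1 he
  have heE : e ∈ E := (union_subset hM.1 hM'.1) (hD heD)
  simp only [mem_filter]
  rcases hS e heD with h | h
  exacts [.inl ⟨h, e, mem_filter.2 ⟨heE, rfl, .inl rfl⟩⟩,
    .inr ⟨h, e, mem_filter.2 ⟨heE, rfl, .inr rfl⟩⟩]

/-- The duals cancel between two perfect matchings, and `R`-feasibility bounds each reduced
cost `c e - y e.1 - y e.2` by `δ e` on `M` and by `-δ e` off `M`. -/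
theorem sum_cost_sub_le_sum_symmDiff [DecidableEq V] (hE : ∀ e ∈ E, e.1 ∈ A ∧ e.2 ∈ B)
    {c δ : V × V → ℝ} {y : V → ℝ} (hM : IsPerfectMatching A B E M)
    (hM' : IsPerfectMatching A B E M') (hfeas : ∀ e ∈ E, 0 ≤ slack M c δ y e) :
    ∑ e ∈ M, c e - ∑ e ∈ M', c e ≤ ∑ e ∈ symmDiff M M', δ e := by
  set g : V × V → ℝ := fun e => c e - (y e.1 + y e.2)
  have hdual : ∀ {N}, IsPerfectMatching A B E N →
      ∑ e ∈ N, c e = ∑ e ∈ N, g e + (∑ a ∈ A, y a + ∑ b ∈ B, y b) := fun hN => by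
    rw [sum_sub_distrib, sum_add_distrib, hN.sum_fst hE, hN.sum_snd hE, sub_add_cancel]
  have hin : ∀ e ∈ M \ M', g e ≤ δ e := fun e he => by
    have := hfeas e (hM.1 (mem_sdiff.1 he).1)
    rw [slack, if_pos (mem_sdiff.1 he).1] at this
    linarith
  have hout : ∀ e ∈ M' \ M, -g e ≤ δ e := fun e he => by
    have := hfeas e (hM'.1 (mem_sdiff.1 he).1)
    rw [slack, if_neg (mem_sdiff.1 he).2] at this
    linarith
  calc ∑ e ∈ M, c e - ∑ e ∈ M', c e = ∑ e ∈ M \ M', g e - ∑ e ∈ M' \ M, g e := by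
        rw [hdual hM, hdual hM', sum_sdiff_sub_sum_sdiff]; ring
    _ ≤ ∑ e ∈ M \ M', δ e + ∑ e ∈ M' \ M, δ e := by
        rw [sub_eq_add_neg, ← sum_neg_distrib]
        exact add_le_add (sum_le_sum hin) (sum_le_sum hout)
    _ = ∑ e ∈ symmDiff M M', δ e := by
        rw [symmDiff_def, sup_eq_union, sum_union disjoint_sdiff_sdiff]

end IsPerfectMatching

theorem ROptimal_cost_le_general {V ι : Type*} [DecidableEq V] [DecidableEq ι]
    (A B : Finset V) (E M Mopt : Finset (V × V)) (piece : V × V → ι)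
    (boundary : Finset V) (c δ : V × V → ℝ) (y : V → ℝ)
    (n : ℕ) (r k₁ k₂ : ℝ)
    (hr : 1 ≤ Real.sqrt r) (hk₁ : 0 ≤ k₁)
    (hA : A.card = n) (hAB : Disjoint A B)
    (hE : ∀ e ∈ E, e.1 ∈ A ∧ e.2 ∈ B)
    (hδ : ∀ e ∈ E, δ e =
      if e.1 ∈ boundary ∨ e.2 ∈ boundary then
        max 1 (max ((((E.filter fun f => piece f = piece e).card : ℝ) * n) /
          ((E.card : ℝ) * Real.sqrt r)) (2 * Real.sqrt r))
      else 1)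
    (hbcard : (boundary.card : ℝ) ≤ k₂ * n / Real.sqrt r)
    (hpiececard : ∀ j : ι,
      (((boundary.filter fun v =>
        (E.filter fun f => piece f = j ∧ (f.1 = v ∨ f.2 = v)).Nonempty).card : ℝ))
        ≤ k₁ * Real.sqrt r)
    (hM : IsPerfectMatching A B E M) (hMopt : IsPerfectMatching A B E Mopt)
    (hfeas : ∀ e ∈ E, 0 ≤ slack M c δ y e) :
    ∑ e ∈ M, c e ≤ ∑ e ∈ Mopt, c e + (2 * k₁ + 4 * k₂ + 2) * n := by
  have hs : 0 < Real.sqrt r := one_pos.trans_le hr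
  set D := symmDiff M Mopt
  set Dbd := {e ∈ D | e.1 ∈ boundary ∨ e.2 ∈ boundary}
  have hDM : D ⊆ M ∪ Mopt := symmDiff_le_sup
  have hDE : D ⊆ E := hDM.trans (union_subset hM.1 hMopt.1)
  have hDbdM : Dbd ⊆ M ∪ Mopt := (filter_subset _ _).trans hDM
  have hcardD : (#D : ℝ) ≤ 2 * n := by exact_mod_cast hA ▸ hM.card_symmDiff_le hE hMopt
  have hcardDbd : (#Dbd : ℝ) * (2 * Real.sqrt r) ≤ 4 * k₂ * n := by
    have hDbd : (#Dbd : ℝ) ≤ 2 * #boundary := by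
      exact_mod_cast hM.card_le_two_mul_card_of_covered hAB hE hMopt hDbdM
        fun e he => (mem_filter.1 he).2
    nlinarith [(le_div_iff₀ hs).1 hbcard]
  have hpieceDbd (j : ι) : (#{e ∈ Dbd | piece e = j} : ℝ) ≤ 2 * k₁ * Real.sqrt r := by
    have := hM.card_filter_piece_le hAB hE hMopt hDbdM (fun e he => (mem_filter.1 he).2) piece j
    rw [mul_assoc]
    exact (Nat.cast_le.2 this).trans (by push_cast; linarith [hpiececard j])
  have hδD : ∀ e ∈ D, δ e ≤ 1 + if e.1 ∈ boundary ∨ e.2 ∈ boundary then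
      (#{f ∈ E | piece f = piece e} : ℝ) * n / (#E * Real.sqrt r) + 2 * Real.sqrt r
      else 0 := fun e he => by
    rw [hδ e (hDE he)]
    split_ifs
    exacts [max_one_max_le_one_add (by positivity) (by positivity), by simp]
  calc ∑ e ∈ M, c e ≤ ∑ e ∈ Mopt, c e + ∑ e ∈ D, δ e :=
        sub_le_iff_le_add'.1 (hM.sum_cost_sub_le_sum_symmDiff hE hMopt hfeas)
    _ ≤ ∑ e ∈ Mopt, c e + (#D + ∑ e ∈ Dbd,
          ((#{f ∈ E | piece f = piece e} : ℝ) * n / (#E * Real.sqrt r) + 2 * Real.sqrt r)) :=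
        add_le_add_right (sum_le_card_add_sum_filter _ hδD) _
    _ ≤ ∑ e ∈ Mopt, c e + (2 * k₁ + 4 * k₂ + 2) * n := by
        rw [sum_add_distrib, sum_const, nsmul_eq_mul]
        linarith [sum_card_fiber_mul_div_le ((filter_subset _ _).trans hDE) piece n
          (by positivity) hs hpieceDbd]

/-- If `M` is `R`-optimal (perfect and `R`-feasible) and `Mopt` an optimal perfect
matching, with boundary structure and `δ` as in an `r`-clustering
(`δ(u,v) = max{1, i(u,v)·m_j·n/(m√r), 2·i(u,v)·√r}`, at most `k₂·n/√r` boundary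
vertices in total and at most `k₁·√r` boundary vertices per piece),
then `c(M) ≤ c(Mopt) + (2k₁ + 4k₂ + 2)·n`. -/
theorem ROptimal_cost_le {V ι : Type*} [DecidableEq V] [DecidableEq ι]
    (A B : Finset V) (E M Mopt : Finset (V × V)) (piece : V × V → ι)
    (boundary : Finset V) (c δ : V × V → ℝ) (y : V → ℝ)
    (n : ℕ) (r k₁ k₂ : ℝ)
    (hr : 1 ≤ Real.sqrt r) (hk₁ : 0 ≤ k₁) (hk₂ : 0 ≤ k₂)
    (hA : A.card = n) (hB : B.card = n) (hAB : Disjoint A B)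
    (hEcard : 0 < E.card)
    (hE : ∀ e ∈ E, e.1 ∈ A ∧ e.2 ∈ B)
    (hδ : ∀ e ∈ E, δ e =
      if e.1 ∈ boundary ∨ e.2 ∈ boundary then
        max 1 (max ((((E.filter fun f => piece f = piece e).card : ℝ) * n) /
          ((E.card : ℝ) * Real.sqrt r)) (2 * Real.sqrt r))
      else 1)
    (hbcard : (boundary.card : ℝ) ≤ k₂ * n / Real.sqrt r)
    (hpiececard : ∀ j : ι,
      (((boundary.filter fun v =>
        (E.filter fun f => piece f = j ∧ (f.1 = v ∨ f.2 = v)).Nonempty).card : ℝ))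
        ≤ k₁ * Real.sqrt r)
    (hM : IsPerfectMatching A B E M) (hMopt : IsPerfectMatching A B E Mopt)
    (hfeas : ∀ e ∈ E, 0 ≤ slack M c δ y e)
    (hopt : ∀ M' : Finset (V × V), IsPerfectMatching A B E M' →
      ∑ e ∈ Mopt, c e ≤ ∑ e ∈ M', c e) :
    ∑ e ∈ M, c e ≤ ∑ e ∈ Mopt, c e + (2 * k₁ + 4 * k₂ + 2) * n :=
  ROptimal_cost_le_general A B E M Mopt piece boundary c δ y n r k₁ k₂ hr hk₁ hA hAB hE hδ hbcard
    hpiececard hM hMopt hfeas
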